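/- Let α > 0 and let τ : ℝ → ℝ be twice differentiable with τ(t) > 0 for all t, τ(0) = 1, τ'(0) = 0, and τ''(t) = α / (2 τ(t)^(1+α)) for all t ∈ ℝ. Then the function t ↦ (τ'(t)/τ(t))² is integrable on (0, ∞), i.e. ∫₀^∞ (τ'(t)/τ(t))² dt < ∞. -/

import Mathlib

/-!
The pseudo-energy `τ'² + τ^(-α)` is conserved by the equation, so `τ'² ≤ 1`. Since `τ'' > 0` and
`τ'(0) = 0`, also `τ' ≥ 0` on `[0, ∞)`. Hence `(τ'/τ)² ≤ τ'/τ² = (-1/τ)'` there, and the integral of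
the right-hand side over `(0, ∞)` is bounded by `1/τ(0)` because `-1/τ` is increasing and negative.
-/

open MeasureTheory Set Filter

theorem integrableOn_Ioi_deriv_of_nonneg_of_le {g g' : ℝ → ℝ} {a C : ℝ}
    (hderiv : ∀ x ∈ Ici a, HasDerivAt g (g' x) x) (hg'_nonneg : ∀ x ∈ Ioi a, 0 ≤ g' x)
    (hg_le : ∀ x ∈ Ici a, g x ≤ C) : IntegrableOn g' (Ioi a) := by
  have hg_cont : ContinuousOn g (Ici a) := fun x hx => (hderiv x hx).continuousAt.continuousWithinAt
  have hint : ∀ b, IntegrableOn g' (Ioc a b) := fun b =>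
    intervalIntegral.integrableOn_deriv_of_nonneg (hg_cont.mono Icc_subset_Ici_self)
      (fun x hx => hderiv x (le_of_lt hx.1)) fun x hx => hg'_nonneg x hx.1
  refine integrableOn_Ioi_of_intervalIntegral_norm_bounded (C - g a) a hint tendsto_id ?_
  filter_upwards [eventually_ge_atTop a] with b hab
  calc ∫ x in a..b, ‖g' x‖
      = ∫ x in a..b, g' x := intervalIntegral.integral_congr_ae <| .of_forall fun x hx => by
        rw [uIoc_of_le hab] at hx
        exact Real.norm_of_nonneg (hg'_nonneg x hx.1)
    _ = g b - g a := intervalIntegral.integral_eq_sub_of_hasDerivAt_of_le hab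
        (hg_cont.mono Icc_subset_Ici_self) (fun x hx => hderiv x (le_of_lt hx.1))
        ((intervalIntegrable_iff_integrableOn_Ioc_of_le hab).2 (hint b))
    _ ≤ C - g a := by linarith [hg_le b hab]

theorem integrableOn_Ioi_sq_div_of_nonneg_of_le_one {f f' : ℝ → ℝ} {a : ℝ}
    (hf_pos : ∀ x ∈ Ici a, 0 < f x) (hderiv : ∀ x ∈ Ici a, HasDerivAt f (f' x) x)
    (hf'_cont : ContinuousOn f' (Ioi a)) (hf'_nonneg : ∀ x ∈ Ioi a, 0 ≤ f' x)
    (hf'_le_one : ∀ x ∈ Ioi a, f' x ≤ 1) :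
    IntegrableOn (fun x => (f' x / f x) ^ 2) (Ioi a) := by
  have hdom : IntegrableOn (fun x => f' x / f x ^ 2) (Ioi a) := by
    refine integrableOn_Ioi_deriv_of_nonneg_of_le (g := fun x => -(f x)⁻¹) (C := 0)
      (fun x hx => ?_) (fun x hx => div_nonneg (hf'_nonneg x hx) (sq_nonneg _))
      (fun x hx => neg_nonpos.2 (inv_nonneg.2 (hf_pos x hx).le))
    simpa [neg_div] using ((hderiv x hx).fun_inv (hf_pos x hx).ne').fun_neg
  have hf_cont : ContinuousOn f (Ioi a) := fun x hx =>
    (hderiv x (Ioi_subset_Ici_self hx)).continuousAt.continuousWithinAt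
  refine hdom.mono' (((hf'_cont.div hf_cont fun x hx => (hf_pos x (Ioi_subset_Ici_self hx)).ne').pow 2
    ).aestronglyMeasurable measurableSet_Ioi) ((ae_restrict_iff' measurableSet_Ioi).2 ?_)
  refine .of_forall fun x hx => ?_
  rw [Real.norm_of_nonneg (sq_nonneg _), div_pow]
  gcongr
  nlinarith [hf'_nonneg x hx, hf'_le_one x hx]

namespace ScalingODE

variable {α : ℝ} {τ τ' : ℝ → ℝ}

theorem hasDerivAt_energy (hpos : ∀ t, 0 < τ t) (hd1 : ∀ t, HasDerivAt τ (τ' t) t)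
    (hd2 : ∀ t, HasDerivAt τ' (α / (2 * τ t ^ (1 + α))) t) (t : ℝ) :
    HasDerivAt (fun s => τ' s ^ 2 + τ s ^ (-α)) 0 t := by
  have hkin : HasDerivAt (fun s => τ' s ^ 2) (2 * τ' t * (α / (2 * τ t ^ (1 + α)))) t := by
    simpa [mul_comm] using (hd2 t).fun_pow 2
  have hpot : HasDerivAt (fun s => τ s ^ (-α)) (τ' t * (-α) * τ t ^ (-α - 1)) t :=
    (hd1 t).rpow_const (Or.inl (hpos t).ne')
  have hcancel : 2 * τ' t * (α / (2 * τ t ^ (1 + α))) + τ' t * (-α) * τ t ^ (-α - 1) = 0 := by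
    rw [show -α - 1 = -(1 + α) by ring, Real.rpow_neg (hpos t).le]
    have := Real.rpow_pos_of_pos (hpos t) (1 + α)
    field_simp
    ring
  simpa only [hcancel] using hkin.fun_add hpot

theorem energy_eq (hpos : ∀ t, 0 < τ t) (hd1 : ∀ t, HasDerivAt τ (τ' t) t)
    (hd2 : ∀ t, HasDerivAt τ' (α / (2 * τ t ^ (1 + α))) t) (s t : ℝ) :
    τ' s ^ 2 + τ s ^ (-α) = τ' t ^ 2 + τ t ^ (-α) :=
  is_const_of_deriv_eq_zero (fun t => (hasDerivAt_energy hpos hd1 hd2 t).differentiableAt)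
    (fun t => (hasDerivAt_energy hpos hd1 hd2 t).deriv) s t

theorem sq_deriv_le_one (hpos : ∀ t, 0 < τ t) (hτ0 : τ 0 = 1) (hτ'0 : τ' 0 = 0)
    (hd1 : ∀ t, HasDerivAt τ (τ' t) t)
    (hd2 : ∀ t, HasDerivAt τ' (α / (2 * τ t ^ (1 + α))) t) (t : ℝ) : τ' t ^ 2 ≤ 1 := by
  have := energy_eq hpos hd1 hd2 t 0
  rw [hτ0, hτ'0, Real.one_rpow] at this
  linarith [Real.rpow_pos_of_pos (hpos t) (-α)]

theorem monotone_deriv (hα : 0 ≤ α) (hpos : ∀ t, 0 < τ t)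
    (hd2 : ∀ t, HasDerivAt τ' (α / (2 * τ t ^ (1 + α))) t) : Monotone τ' :=
  monotone_of_hasDerivAt_nonneg hd2 fun t => by
    have := Real.rpow_pos_of_pos (hpos t) (1 + α)
    positivity

end ScalingODE

open ScalingODE in
/-- For the solution of the scaling ODE, `t ↦ (τ'(t)/τ(t))²` is integrable on `(0,∞)`. -/
theorem scaling_ode_integrable (α : ℝ) (hα : 0 < α) (τ τ' : ℝ → ℝ)
    (hpos : ∀ t, 0 < τ t) (hτ0 : τ 0 = 1) (hτ'0 : τ' 0 = 0)
    (hd1 : ∀ t, HasDerivAt τ (τ' t) t)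
    (hd2 : ∀ t, HasDerivAt τ' (α / (2 * τ t ^ (1 + α))) t) :
    MeasureTheory.IntegrableOn (fun t => (τ' t / τ t) ^ 2) (Set.Ioi (0 : ℝ)) := by
  have hτ'_cont : Continuous τ' := continuous_iff_continuousAt.2 fun t => (hd2 t).continuousAt
  refine integrableOn_Ioi_sq_div_of_nonneg_of_le_one (fun t _ => hpos t) (fun t _ => hd1 t)
    hτ'_cont.continuousOn (fun t ht => ?_) (fun t _ => ?_)
  · exact hτ'0 ▸ monotone_deriv hα.le hpos hd2 (le_of_lt ht)
  · exact le_of_abs_le ((sq_le_one_iff_abs_le_one _).1 (sq_deriv_le_one hpos hτ0 hτ'0 hd1 hd2 t))
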